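/- arXiv:2501.03845 — 4 statements merged into one kernel-verified Lean document; each statement's English description precedes it below -/
import Mathlib

section
/- Let A, B, C > 0 be real numbers and σ > N+2 where N ≥ 1 is an integer. Define h(t) = A t² + B t^{N+2} − C t^σ for t > 0. Then h has a unique positive critical point t₀, this t₀ is the global maximum of h on (0,∞), and h''(t₀) < 0. -/
/-!
On `(0, ∞)` the derivative of `h(t) = A t^a + B t^b - C t^c` factors as `t^(c-1) q(t)` with
`q(t) = a A t^(a-c) + b B t^(b-c) - c C`. Both powers in `q` have negative exponent, so `q`
decreases strictly from `+∞` at `0⁺` towards `-c C < 0` at `∞` and has exactly one zero `t₀`.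
Hence `h` increases before `t₀` and decreases after it, and `h''(t₀) = t₀^(c-1) q'(t₀) < 0`.
-/

open Real Set Filter Topology

namespace PowerTrinomial

noncomputable def scaledDeriv (A B C a b c t : ℝ) : ℝ :=
  a * A * t ^ (a - c) + b * B * t ^ (b - c) - c * C

variable {A B C a b c : ℝ}

theorem continuousOn_scaledDeriv : ContinuousOn (scaledDeriv A B C a b c) (Ioi 0) :=
  fun t ht => by
    have : t ≠ 0 := ne_of_gt ht
    unfold scaledDeriv
    fun_prop (disch := simp [this])

theorem hasDerivAt_of_eqOn {h : ℝ → ℝ}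
    (hh : EqOn h (fun t => A * t ^ a + B * t ^ b - C * t ^ c) (Ioi 0)) {t : ℝ} (ht : 0 < t) :
    HasDerivAt h (t ^ (c - 1) * scaledDeriv A B C a b c t) t := by
  have hf : HasDerivAt (fun t => A * t ^ a + B * t ^ b - C * t ^ c)
      (A * (a * t ^ (a - 1)) + B * (b * t ^ (b - 1)) - C * (c * t ^ (c - 1))) t :=
    (((hasDerivAt_rpow_const (Or.inl ht.ne')).const_mul A).add
      ((hasDerivAt_rpow_const (Or.inl ht.ne')).const_mul B)).sub
      ((hasDerivAt_rpow_const (Or.inl ht.ne')).const_mul C)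
  have hpow (p : ℝ) : t ^ (c - 1) * t ^ (p - c) = t ^ (p - 1) := by
    rw [← rpow_add ht]
    ring_nf
  refine (hf.congr_of_eventuallyEq ?_).congr_deriv ?_
  · filter_upwards [Ioi_mem_nhds ht] with s hs using hh hs
  · calc A * (a * t ^ (a - 1)) + B * (b * t ^ (b - 1)) - C * (c * t ^ (c - 1))
        = a * A * (t ^ (c - 1) * t ^ (a - c)) + b * B * (t ^ (c - 1) * t ^ (b - c))
          - c * C * t ^ (c - 1) := by rw [hpow, hpow]; ring
      _ = t ^ (c - 1) * scaledDeriv A B C a b c t := by unfold scaledDeriv; ring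

theorem exists_hasDerivAt_scaledDeriv_neg (hA : 0 < A) (ha : 0 < a) (hac : a < c)
    (hB : 0 ≤ B) (hb : 0 ≤ b) (hbc : b ≤ c) {t : ℝ} (ht : 0 < t) :
    ∃ q', HasDerivAt (scaledDeriv A B C a b c) q' t ∧ q' < 0 := by
  have hda := (hasDerivAt_rpow_const (p := a - c) (Or.inl ht.ne')).const_mul (a * A)
  have hdb := (hasDerivAt_rpow_const (p := b - c) (Or.inl ht.ne')).const_mul (b * B)
  refine ⟨_, (hda.add hdb).sub_const (c * C), ?_⟩
  have h₁ : a * A * ((a - c) * t ^ (a - c - 1)) < 0 :=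
    mul_neg_of_pos_of_neg (by positivity) (mul_neg_of_neg_of_pos (by linarith) (by positivity))
  have h₂ : b * B * ((b - c) * t ^ (b - c - 1)) ≤ 0 :=
    mul_nonpos_of_nonneg_of_nonpos (by positivity)
      (mul_nonpos_of_nonpos_of_nonneg (by linarith) (by positivity))
  linarith

theorem strictAntiOn_scaledDeriv (hA : 0 < A) (ha : 0 < a) (hac : a < c)
    (hB : 0 ≤ B) (hb : 0 ≤ b) (hbc : b ≤ c) :
    StrictAntiOn (scaledDeriv A B C a b c) (Ioi 0) := by
  refine strictAntiOn_of_deriv_neg (convex_Ioi 0) continuousOn_scaledDeriv fun t ht => ?_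
  rw [interior_Ioi] at ht
  obtain ⟨q', hq', hneg⟩ := exists_hasDerivAt_scaledDeriv_neg (C := C) hA ha hac hB hb hbc ht
  rwa [hq'.deriv]

theorem exists_scaledDeriv_eq_zero (hA : 0 < A) (hC : 0 < C) (ha : 0 < a) (hac : a < c)
    (hB : 0 ≤ B) (hb : 0 ≤ b) (hbc : b < c) :
    ∃ t₀, 0 < t₀ ∧ scaledDeriv A B C a b c t₀ = 0 := by
  have hzero : Tendsto (scaledDeriv A B C a b c) (𝓝[>] 0) atTop := by
    have hlow : Tendsto (fun t : ℝ => a * A * t ^ (a - c) - c * C) (𝓝[>] 0) atTop :=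
      tendsto_atTop_add_const_right _ _
        ((tendsto_rpow_neg_nhdsGT_zero (by linarith)).const_mul_atTop (by positivity))
    refine tendsto_atTop_mono' _ ?_ hlow
    filter_upwards [self_mem_nhdsWithin] with t (ht : 0 < t)
    have : 0 ≤ b * B * t ^ (b - c) := by positivity
    unfold scaledDeriv
    linarith
  have hinf : Tendsto (scaledDeriv A B C a b c) atTop (𝓝 (-(c * C))) := by
    have h₁ := (tendsto_rpow_neg_atTop (y := c - a) (by linarith)).const_mul (a * A)
    have h₂ := (tendsto_rpow_neg_atTop (y := c - b) (by linarith)).const_mul (b * B)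
    simp only [neg_sub, mul_zero] at h₁ h₂
    have := (h₁.add h₂).sub_const (c * C)
    rwa [add_zero, zero_sub] at this
  obtain ⟨x, hx, hx0⟩ := ((hzero.eventually_gt_atTop 0).and self_mem_nhdsWithin).exists
  have hneg : -(c * C) < 0 := neg_neg_of_pos (by nlinarith)
  obtain ⟨y, hy, hxy⟩ :=
    ((hinf.eventually (gt_mem_nhds hneg)).and (eventually_gt_atTop x)).exists
  obtain ⟨t₀, ht₀, hq⟩ := intermediate_value_Icc' hxy.le
    (continuousOn_scaledDeriv.mono fun t ht => lt_of_lt_of_le hx0 ht.1)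
    (show (0 : ℝ) ∈ Icc _ _ from ⟨hy.le, hx.le⟩)
  exact ⟨t₀, lt_of_lt_of_le hx0 ht₀.1, hq⟩

theorem exists_unique_critical_point_isMaxOn {h : ℝ → ℝ}
    (hh : EqOn h (fun t => A * t ^ a + B * t ^ b - C * t ^ c) (Ioi 0))
    (hA : 0 < A) (hC : 0 < C) (ha : 0 < a) (hac : a < c)
    (hB : 0 ≤ B) (hb : 0 ≤ b) (hbc : b < c) :
    ∃ t₀ : ℝ, 0 < t₀ ∧ deriv h t₀ = 0 ∧ IsMaxOn h (Ioi 0) t₀ ∧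
      deriv (deriv h) t₀ < 0 ∧ (∀ t, 0 < t → deriv h t = 0 → t = t₀) := by
  set q := scaledDeriv A B C a b c
  obtain ⟨t₀, ht₀, hq₀⟩ := exists_scaledDeriv_eq_zero hA hC ha hac hB hb hbc
  have hanti := strictAntiOn_scaledDeriv (C := C) hA ha hac hB hb hbc.le
  have hd (t : ℝ) (ht : 0 < t) := hasDerivAt_of_eqOn hh ht
  have hdiff (s : Set ℝ) (hs : s ⊆ Ioi 0) : DifferentiableOn ℝ h s := fun t ht =>
    (hd t (hs ht)).differentiableAt.differentiableWithinAt
  refine ⟨t₀, ht₀, by rw [(hd t₀ ht₀).deriv, hq₀, mul_zero], ?_, ?_, fun t ht hdt => ?_⟩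
  · refine isMaxOn_Ioi_of_deriv (hd t₀ ht₀).continuousAt (hdiff _ fun t ht => ht.1)
      (hdiff _ fun t (ht : t₀ < t) => ht₀.trans ht) (fun t ht => ?_) (fun t ht => ?_)
    · have : q t₀ < q t := hanti ht.1 ht₀ ht.2
      rw [(hd t ht.1).deriv]
      exact mul_nonneg (rpow_pos_of_pos ht.1 _).le (by linarith)
    · have ht' : 0 < t := ht₀.trans ht
      have : q t < q t₀ := hanti ht₀ ht' ht
      rw [(hd t ht').deriv]
      exact mul_nonpos_of_nonneg_of_nonpos (by positivity) (by linarith)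
  · obtain ⟨q', hq', hq'neg⟩ := exists_hasDerivAt_scaledDeriv_neg hA ha hac hB hb hbc.le ht₀
    have hEv : deriv h =ᶠ[𝓝 t₀] fun t => t ^ (c - 1) * q t := by
      filter_upwards [Ioi_mem_nhds ht₀] with t ht using (hd t ht).deriv
    rw [(((hasDerivAt_rpow_const (Or.inl ht₀.ne')).mul hq').congr_of_eventuallyEq hEv).deriv,
      hq₀, mul_zero, zero_add]
    exact mul_neg_of_pos_of_neg (by positivity) hq'neg
  · rw [(hd t ht).deriv] at hdt
    have hq : q t = 0 := (mul_eq_zero.1 hdt).resolve_left (by positivity)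
    exact hanti.injOn ht ht₀ (hq.trans hq₀.symm)

end PowerTrinomial

theorem stmt_0_general (N : ℕ) (A B C σ : ℝ) (hA : 0 < A) (hB : 0 < B) (hC : 0 < C)
    (hσ : (N : ℝ) + 2 < σ)
    (h : ℝ → ℝ) (hh : ∀ t : ℝ, h t = A * t ^ 2 + B * t ^ (N + 2) - C * t ^ σ) :
    ∃ t₀ : ℝ, 0 < t₀ ∧ deriv h t₀ = 0 ∧ (∀ t, 0 < t → h t ≤ h t₀) ∧
      deriv (deriv h) t₀ < 0 ∧ (∀ t, 0 < t → deriv h t = 0 → t = t₀) := by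
  have hrpow : EqOn h (fun t => A * t ^ (2 : ℝ) + B * t ^ ((N : ℝ) + 2) - C * t ^ σ) (Ioi 0) :=
    fun t _ => by
      simp only [hh]
      norm_cast
  obtain ⟨t₀, ht₀, hcrit, hmax, hsecond, huniq⟩ :=
    PowerTrinomial.exists_unique_critical_point_isMaxOn hrpow hA hC two_pos
      (by linarith [N.cast_nonneg (α := ℝ)]) hB.le (by positivity) hσ
  exact ⟨t₀, ht₀, hcrit, fun t ht => hmax ht, hsecond, huniq⟩

/-- For `h t = A t² + B t^(N+2) − C t^σ` with `A,B,C > 0`, `σ > N+2`,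
`h` has a unique positive critical point `t₀`, which is the global maximum of `h`
on `(0,∞)`, and `h''(t₀) < 0`. -/
theorem stmt_0 (N : ℕ) (hN : 1 ≤ N) (A B C σ : ℝ) (hA : 0 < A) (hB : 0 < B) (hC : 0 < C)
    (hσ : (N : ℝ) + 2 < σ)
    (h : ℝ → ℝ) (hh : ∀ t : ℝ, h t = A * t ^ 2 + B * t ^ (N + 2) - C * t ^ σ) :
    ∃ t₀ : ℝ, 0 < t₀ ∧ deriv h t₀ = 0 ∧ (∀ t, 0 < t → h t ≤ h t₀) ∧
      deriv (deriv h) t₀ < 0 ∧ (∀ t, 0 < t → deriv h t = 0 → t = t₀) :=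
  stmt_0_general N A B C σ hA hB hC hσ h hh
end

section
/- Let φ : ℝ → ℝ be the odd function satisfying φ(0)=0 and φ'(s) = 1/√(1+2φ(s)²). Then for all t ≥ 0, (1/2)·φ(t)² ≤ φ(t)·φ'(t)·t ≤ φ(t)². -/
/-!
On `t ≥ 0` the solution is nonnegative and increasing, so `φ' = (1 + 2φ²)^{-1/2}` is decreasing
along it: `φ` is concave and the mean value theorem gives `t φ'(t) ≤ φ(t)`, the upper bound.
For the lower bound, `G(y) = y √(1 + 2y²)` satisfies `(G ∘ φ)' = (1 + 4φ²) / (1 + 2φ²) ≤ 2`,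
hence `φ(t) √(1 + 2φ(t)²) ≤ 2t`, which is `φ(t)² / 2 ≤ φ(t) φ'(t) t` after multiplying by
`φ(t) φ'(t) / 2`.
-/

open Real Set

theorem image_sub_le_mul_sub_of_hasDerivAt_le {F F' : ℝ → ℝ} {a b C : ℝ} (hab : a ≤ b)
    (hF : ∀ s ∈ Icc a b, HasDerivAt F (F' s) s) (hle : ∀ s ∈ Ioo a b, F' s ≤ C) :
    F b - F a ≤ C * (b - a) := by
  refine (convex_Icc a b).image_sub_le_mul_sub_of_deriv_le
    (fun s hs => (hF s hs).continuousAt.continuousWithinAt) (fun s hs => ?_) (fun s hs => ?_)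
    a (left_mem_Icc.2 hab) b (right_mem_Icc.2 hab) hab
  all_goals rw [interior_Icc] at hs
  · exact (hF s (Ioo_subset_Icc_self hs)).differentiableAt.differentiableWithinAt
  · exact (hF s (Ioo_subset_Icc_self hs)).deriv ▸ hle s hs

theorem antitoneOn_one_div_sqrt_one_add_two_mul_sq :
    AntitoneOn (fun y : ℝ => 1 / √(1 + 2 * y ^ 2)) (Ici 0) :=
  fun x (hx : 0 ≤ x) _ _ hxy => by dsimp only; gcongr

theorem hasDerivAt_mul_sqrt_one_add_two_mul_sq (y : ℝ) :
    HasDerivAt (fun y => y * √(1 + 2 * y ^ 2)) ((1 + 4 * y ^ 2) / √(1 + 2 * y ^ 2)) y := by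
  have hpos : 0 < 1 + 2 * y ^ 2 := by positivity
  refine ((hasDerivAt_id' y).fun_mul
    ((((hasDerivAt_pow 2 y).const_mul 2).const_add 1).sqrt hpos.ne')).congr_deriv ?_
  field_simp
  rw [sq_sqrt hpos.le]
  ring

section Solution

variable {φ : ℝ → ℝ} (hode : ∀ s : ℝ, 0 ≤ s → HasDerivAt φ (1 / √(1 + 2 * (φ s) ^ 2)) s)
include hode

theorem solution_monotoneOn : MonotoneOn φ (Ici 0) :=
  monotoneOn_of_hasDerivWithinAt_nonneg (convex_Ici 0)
    (fun s hs => (hode s hs).continuousAt.continuousWithinAt)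
    (fun s hs => (hode s (interior_subset hs)).hasDerivWithinAt) fun _ _ => by positivity

theorem solution_nonneg (h0 : φ 0 = 0) {t : ℝ} (ht : 0 ≤ t) : 0 ≤ φ t :=
  h0 ▸ solution_monotoneOn hode self_mem_Ici ht ht

theorem mul_deriv_solution_le (h0 : φ 0 = 0) {t : ℝ} (ht : 0 ≤ t) :
    1 / √(1 + 2 * (φ t) ^ 2) * t ≤ φ t := by
  have key := image_sub_le_mul_sub_of_hasDerivAt_le (F := fun s => -φ s)
    (C := -(1 / √(1 + 2 * (φ t) ^ 2))) ht (fun s hs => (hode s hs.1).neg) fun s hs => by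
      have hφs : 0 ≤ φ s := solution_nonneg hode h0 hs.1.le
      have hφst : φ s ≤ φ t := solution_monotoneOn hode hs.1.le ht hs.2.le
      exact neg_le_neg (antitoneOn_one_div_sqrt_one_add_two_mul_sq hφs (hφs.trans hφst) hφst)
  simp only [h0] at key
  linarith

theorem solution_mul_sqrt_le (h0 : φ 0 = 0) {t : ℝ} (ht : 0 ≤ t) :
    φ t * √(1 + 2 * (φ t) ^ 2) ≤ 2 * t := by
  have key := image_sub_le_mul_sub_of_hasDerivAt_le (C := 2) ht
    (fun s hs => (hasDerivAt_mul_sqrt_one_add_two_mul_sq (φ s)).comp s (hode s hs.1)) fun s _ => by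
      have hsq : √(1 + 2 * φ s ^ 2) ^ 2 = 1 + 2 * φ s ^ 2 := sq_sqrt (by positivity)
      rw [div_mul_div_comm, mul_one, ← sq, hsq, div_le_iff₀ (by positivity)]
      nlinarith
  simp only [Function.comp, h0, zero_mul] at key
  linarith

end Solution

theorem stmt_3_general (φ : ℝ → ℝ) (h0 : φ 0 = 0)
    (hode : ∀ s : ℝ, 0 ≤ s → HasDerivAt φ (1 / Real.sqrt (1 + 2 * (φ s) ^ 2)) s) :
    ∀ t : ℝ, 0 ≤ t →
      (1 / 2) * (φ t) ^ 2 ≤ φ t * deriv φ t * t ∧ φ t * deriv φ t * t ≤ (φ t) ^ 2 := by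
  intro t ht
  have hφ : 0 ≤ φ t := solution_nonneg hode h0 ht
  have hlow := solution_mul_sqrt_le hode h0 ht
  have hup := mul_deriv_solution_le hode h0 ht
  rw [(hode t ht).deriv]
  constructor
  · calc 1 / 2 * φ t ^ 2 = φ t * √(1 + 2 * φ t ^ 2) * (φ t * (1 / √(1 + 2 * φ t ^ 2)) / 2) := by
          field_simp
      _ ≤ 2 * t * (φ t * (1 / √(1 + 2 * φ t ^ 2)) / 2) := by gcongr
      _ = φ t * (1 / √(1 + 2 * φ t ^ 2)) * t := by ring
  · calc φ t * (1 / √(1 + 2 * φ t ^ 2)) * t = φ t * (1 / √(1 + 2 * φ t ^ 2) * t) := by ring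
      _ ≤ φ t * φ t := by gcongr
      _ = φ t ^ 2 := (sq (φ t)).symm

/-- For the odd solution `φ` of `φ' = (1+2φ²)^{-1/2}`, `φ(0)=0`,
one has `(1/2) φ(t)² ≤ φ(t) φ'(t) t ≤ φ(t)²` for all `t ≥ 0`. -/
theorem stmt_3 (φ : ℝ → ℝ) (h0 : φ 0 = 0) (hodd : ∀ t : ℝ, φ (-t) = - φ t)
    (hode : ∀ s : ℝ, 0 ≤ s → HasDerivAt φ (1 / Real.sqrt (1 + 2 * (φ s) ^ 2)) s) :
    ∀ t : ℝ, 0 ≤ t →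
      (1 / 2) * (φ t) ^ 2 ≤ φ t * deriv φ t * t ∧ φ t * deriv φ t * t ≤ (φ t) ^ 2 :=
  stmt_3_general φ h0 hode
end

section
/- Let φ satisfy φ(0)=0 and φ'(s)=1/√(1+2φ(s)²) on [0,∞). Then lim_{s→∞} φ(s)/√s = 2^{1/4} and lim_{s→∞} φ'(s)·√s = 2^{−3/4}. -/
open Real Filter Topology

/-!
Two-sided bounds on `φ` come from comparing derivatives on `[0, ∞)`: `s - φ² / √2` is
nondecreasing because `√2 φ ≤ √(1 + 2φ²)`, and `φ² + √2 φ - √2 s` is nondecreasing because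
`√(1 + 2φ²) ≤ 1 + √2 φ` for `φ ≥ 0`. Hence `√2 s ≤ (φ + √2/2)²` and `φ² ≤ √2 s`, which pins `φ`
between `2^(1/4) √s - √2/2` and `2^(1/4) √s`. The second limit follows from
`φ'(s) √s = (1/s + 2 (φ/√s)²)^(-1/2) → (2 √2)^(-1/2)`.
-/

theorem le_of_hasDerivAt_nonneg_Ici {f f' : ℝ → ℝ} {a b : ℝ}
    (hf : ∀ x, a ≤ x → HasDerivAt f (f' x) x) (hf' : ∀ x, a < x → 0 ≤ f' x) (hab : a ≤ b) :
    f a ≤ f b := by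
  refine monotoneOn_of_hasDerivWithinAt_nonneg (f' := f') (convex_Ici a)
    (fun x hx => (hf x hx).continuousAt.continuousWithinAt) (fun x hx => ?_) (fun x hx => ?_)
    Set.self_mem_Ici hab hab
  · exact (hf x (interior_subset hx)).hasDerivWithinAt
  · rw [interior_Ici] at hx
    exact hf' x hx

theorem tendsto_div_sqrt_of_sandwich {f : ℝ → ℝ} {c d : ℝ}
    (hlow : ∀ᶠ s in atTop, c * √s - d ≤ f s) (hup : ∀ᶠ s in atTop, f s ≤ c * √s) :
    Tendsto (fun s => f s / √s) atTop (𝓝 c) := by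
  have hinv : Tendsto (fun s => (√s)⁻¹) atTop (𝓝 0) :=
    tendsto_sqrt_atTop.inv_tendsto_atTop
  have hlim : Tendsto (fun s => c - d * (√s)⁻¹) atTop (𝓝 c) := by
    simpa using tendsto_const_nhds.sub (hinv.const_mul d)
  refine tendsto_of_tendsto_of_tendsto_of_le_of_le' hlim tendsto_const_nhds ?_ ?_
  · filter_upwards [hlow, eventually_gt_atTop 0] with s hs hpos
    rw [le_div_iff₀ (sqrt_pos.2 hpos)]
    calc (c - d * (√s)⁻¹) * √s = c * √s - d := by field_simp
      _ ≤ f s := hs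
  · filter_upwards [hup, eventually_gt_atTop 0] with s hs hpos
    rwa [div_le_iff₀ (sqrt_pos.2 hpos)]

section

variable {φ : ℝ → ℝ} (hode : ∀ s : ℝ, 0 ≤ s → HasDerivAt φ (1 / √(1 + 2 * φ s ^ 2)) s)
include hode

theorem hasDerivAt_ode_solution_sq {s : ℝ} (hs : 0 ≤ s) :
    HasDerivAt (fun s => φ s ^ 2) (2 * φ s / √(1 + 2 * φ s ^ 2)) s :=
  ((hode s hs).fun_pow 2).congr_deriv (by ring)

theorem ode_solution_nonneg (h0 : φ 0 = 0) {s : ℝ} (hs : 0 ≤ s) : 0 ≤ φ s :=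
  h0 ▸ le_of_hasDerivAt_nonneg_Ici hode (fun _ _ => by positivity) hs

theorem ode_solution_sq_le (h0 : φ 0 = 0) {s : ℝ} (hs : 0 ≤ s) : φ s ^ 2 ≤ √2 * s := by
  have hmono := le_of_hasDerivAt_nonneg_Ici (f := fun s => s - √2 / 2 * φ s ^ 2)
    (fun x hx => (hasDerivAt_id' x).sub ((hasDerivAt_ode_solution_sq hode hx).const_mul _))
    (fun x _ => ?_) hs
  · simp only [h0] at hmono
    nlinarith [sq_sqrt (zero_le_two (α := ℝ)), sqrt_nonneg 2]
  · rw [sub_nonneg, mul_div_assoc', ← mul_assoc, div_mul_cancel₀ _ two_ne_zero,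
      div_le_one (by positivity)]
    calc √2 * φ x ≤ √(2 * φ x ^ 2) := by
          rw [sqrt_mul zero_le_two, sqrt_sq_eq_abs]
          exact mul_le_mul_of_nonneg_left (le_abs_self _) (sqrt_nonneg 2)
      _ ≤ √(1 + 2 * φ x ^ 2) := sqrt_le_sqrt (by linarith)

theorem le_ode_solution_sq_add (h0 : φ 0 = 0) {s : ℝ} (hs : 0 ≤ s) :
    √2 * s ≤ φ s ^ 2 + √2 * φ s := by
  have hmono := le_of_hasDerivAt_nonneg_Ici (f := fun s => φ s ^ 2 + √2 * φ s - √2 * s)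
    (fun x hx => (((hasDerivAt_ode_solution_sq hode hx).add ((hode x hx).const_mul _)).sub
      ((hasDerivAt_id' x).const_mul _)))
    (fun x hx => ?_) hs
  · simp only [h0] at hmono
    linarith
  · have hφ := ode_solution_nonneg hode h0 hx.le
    have hsqrt2 := sq_sqrt (zero_le_two (α := ℝ))
    have hroot : √(1 + 2 * φ x ^ 2) ≤ 1 + √2 * φ x := by
      rw [sqrt_le_left (by positivity)]
      nlinarith [sqrt_nonneg 2]
    rw [mul_one_div, ← add_div, mul_one, sub_nonneg, le_div_iff₀ (by positivity)]
    nlinarith [sqrt_nonneg 2]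

theorem ode_solution_le (h0 : φ 0 = 0) {s : ℝ} (hs : 0 ≤ s) : φ s ≤ √√2 * √s := by
  rw [← sqrt_mul (sqrt_nonneg 2), ← sqrt_sq (ode_solution_nonneg hode h0 hs)]
  exact sqrt_le_sqrt (ode_solution_sq_le hode h0 hs)

theorem sub_le_ode_solution (h0 : φ 0 = 0) {s : ℝ} (hs : 0 ≤ s) :
    √√2 * √s - √2 / 2 ≤ φ s := by
  have hsq : √2 * s ≤ (φ s + √2 / 2) ^ 2 := by
    nlinarith [le_ode_solution_sq_add hode h0 hs, sq_sqrt (zero_le_two (α := ℝ))]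
  rw [← sqrt_mul (sqrt_nonneg 2), sub_le_iff_le_add,
    ← sqrt_sq (by positivity [ode_solution_nonneg hode h0 hs] : 0 ≤ φ s + √2 / 2)]
  exact sqrt_le_sqrt hsq

theorem deriv_ode_solution_mul_sqrt {s : ℝ} (hs : 0 < s) :
    deriv φ s * √s = (√(s⁻¹ + 2 * (φ s / √s) ^ 2))⁻¹ := by
  have hsum : s⁻¹ + 2 * (φ s / √s) ^ 2 = (1 + 2 * φ s ^ 2) / s := by
    rw [div_pow, sq_sqrt hs.le]
    field_simp
  rw [(hode s hs.le).deriv, hsum, sqrt_div' _ hs.le, inv_div, one_div_mul_eq_div]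

end

/-- For the solution `φ` of `φ' = (1+2φ²)^{-1/2}`, `φ(0)=0` on `[0,∞)`,
one has `φ(s)/√s → 2^(1/4)` and `φ'(s)·√s → 2^(-3/4)` as `s → ∞`. -/
theorem stmt_5 (φ : ℝ → ℝ) (h0 : φ 0 = 0)
    (hode : ∀ s : ℝ, 0 ≤ s → HasDerivAt φ (1 / Real.sqrt (1 + 2 * (φ s) ^ 2)) s) :
    Tendsto (fun s : ℝ => φ s / Real.sqrt s) atTop (𝓝 ((2 : ℝ) ^ ((1 : ℝ) / 4))) ∧
    Tendsto (fun s : ℝ => deriv φ s * Real.sqrt s) atTop (𝓝 ((2 : ℝ) ^ (-(3 : ℝ) / 4))) := by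
  have hratio : Tendsto (fun s => φ s / √s) atTop (𝓝 √√2) :=
    tendsto_div_sqrt_of_sandwich
      ((eventually_ge_atTop 0).mono fun _ hs => sub_le_ode_solution hode h0 hs)
      ((eventually_ge_atTop 0).mono fun _ hs => ode_solution_le hode h0 hs)
  have hquarter : (2 : ℝ) ^ ((1 : ℝ) / 4) = √√2 := by
    rw [sqrt_eq_rpow, sqrt_eq_rpow, ← rpow_mul zero_le_two]
    norm_num
  have hthreequarters : (√(0 + 2 * √√2 ^ 2))⁻¹ = (2 : ℝ) ^ (-(3 : ℝ) / 4) := by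
    rw [zero_add, sq_sqrt (sqrt_nonneg 2), sqrt_eq_rpow, sqrt_eq_rpow,
      ← rpow_one_add' zero_le_two (by norm_num), ← rpow_mul zero_le_two, ← rpow_neg zero_le_two]
    norm_num
  refine ⟨hquarter ▸ hratio, hthreequarters ▸ ?_⟩
  refine Tendsto.congr' ((eventually_gt_atTop 0).mono fun _ hs =>
    (deriv_ode_solution_mul_sqrt hode hs).symm) ?_
  exact ((tendsto_inv_atTop_zero.add ((hratio.pow 2).const_mul 2)).sqrt).inv₀ (by positivity)
end

section
/- Let p > 4 and suppose v : ℝ → ℝ is a bounded, nonincreasing C² function supported on J = (−∞, R*) with R* < ∞, satisfying −v'' = −√2/2 + 2^{(p−4)/4} v^{(p−2)/2} on J, v > 0 on J, v(R*) = v'(R*) = 0, lim_{r→−∞} v(r) = √2/2, and lim_{r→−∞} v'(r) = 0. Then a contradiction arises: multiplying the equation by v' and integrating over J gives 0 on the left side but (p−2)/(2p) > 0 on the right side. Hence no such v exists. -/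
/-!
Along a solution of `-v'' = f(v)` the energy `v'²/2 + F(v)`, with `F' = f`, is constant. Letting
`r → -∞` identifies the constant as `F(√2/2) = 1/p - 1/2 < 0`, while near the endpoint `R*` the
energy is at least `F(v) → F(0) = 0`.
-/

open Real Filter Topology Set

section Energy

variable {f F v : ℝ → ℝ} {R L : ℝ}

theorem hasDerivAt_energy {r : ℝ} (hF : HasDerivAt F (f (v r)) (v r))
    (hv : DifferentiableAt ℝ v r) (hv' : DifferentiableAt ℝ (deriv v) r)
    (hode : -deriv (deriv v) r = f (v r)) :
    HasDerivAt (fun t => deriv v t ^ 2 / 2 + F (v t)) 0 r := by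
  refine (((hv'.hasDerivAt.pow 2).div_const 2).add (hF.comp r hv.hasDerivAt)).congr_deriv ?_
  rw [← hode]
  ring

theorem exists_energy_eq_const (hF : ∀ s, HasDerivAt F (f s) s) (hv : Differentiable ℝ v)
    (hv' : ∀ r < R, DifferentiableAt ℝ (deriv v) r)
    (hode : ∀ r < R, -deriv (deriv v) r = f (v r)) :
    ∃ E, ∀ r < R, deriv v r ^ 2 / 2 + F (v r) = E := by
  have hE : ∀ r < R, HasDerivAt (fun t => deriv v t ^ 2 / 2 + F (v t)) 0 r := fun r hr =>
    hasDerivAt_energy (hF _) (hv r) (hv' r hr) (hode r hr)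
  exact isOpen_Iio.exists_is_const_of_deriv_eq_zero isPreconnected_Iio
    (fun r hr => (hE r hr).differentiableAt.differentiableWithinAt)
    (fun r hr => (hE r hr).deriv)

theorem energy_eq_of_tendsto_atBot (hF : ∀ s, HasDerivAt F (f s) s) (hv : Differentiable ℝ v)
    (hv' : ∀ r < R, DifferentiableAt ℝ (deriv v) r)
    (hode : ∀ r < R, -deriv (deriv v) r = f (v r))
    (hlim : Tendsto v atBot (𝓝 L)) (hlim' : Tendsto (deriv v) atBot (𝓝 0)) :
    ∀ r < R, deriv v r ^ 2 / 2 + F (v r) = F L := by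
  obtain ⟨E, hE⟩ := exists_energy_eq_const hF hv hv' hode
  have hto : Tendsto (fun r => deriv v r ^ 2 / 2 + F (v r)) atBot (𝓝 (0 ^ 2 / 2 + F L)) :=
    ((hlim'.pow 2).div_const 2).add ((hF L).continuousAt.tendsto.comp hlim)
  have hE_eventually : (fun r => deriv v r ^ 2 / 2 + F (v r)) =ᶠ[atBot] fun _ => E :=
    (eventually_lt_atBot R).mono hE
  have hE_val : E = 0 ^ 2 / 2 + F L :=
    tendsto_nhds_unique tendsto_const_nhds (hto.congr' hE_eventually)
  simpa [hE_val] using hE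

theorem primitive_zero_le_of_energy (hF : ∀ s, HasDerivAt F (f s) s) (hv : Differentiable ℝ v)
    (hv' : ∀ r < R, DifferentiableAt ℝ (deriv v) r)
    (hode : ∀ r < R, -deriv (deriv v) r = f (v r)) (hvR : v R = 0)
    (hlim : Tendsto v atBot (𝓝 L)) (hlim' : Tendsto (deriv v) atBot (𝓝 0)) :
    F 0 ≤ F L := by
  have hto : Tendsto (fun r => F (v r)) (𝓝[<] R) (𝓝 (F 0)) := by
    have hvR' := (hv R).continuousAt.continuousWithinAt (s := Iio R)
    rw [ContinuousWithinAt, hvR] at hvR'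
    exact (hF 0).continuousAt.tendsto.comp hvR'
  refine le_of_tendsto hto (eventually_nhdsWithin_of_forall fun r hr => ?_)
  rw [← energy_eq_of_tendsto_atBot hF hv hv' hode hlim hlim' r hr]
  linarith [sq_nonneg (deriv v r)]

end Energy

section Potential

noncomputable def potential (p s : ℝ) : ℝ :=
  -(√2 / 2) * s + (2 : ℝ) ^ ((p - 4) / 4) * (s ^ (p / 2) / (p / 2))

variable {p : ℝ}

theorem hasDerivAt_potential (hp : 2 ≤ p) (s : ℝ) :
    HasDerivAt (potential p) (-√2 / 2 + (2 : ℝ) ^ ((p - 4) / 4) * s ^ ((p - 2) / 2)) s := by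
  have hrpow := Real.hasDerivAt_rpow_const (x := s) (p := p / 2) (Or.inr (by linarith))
  refine (((hasDerivAt_id s).const_mul (-(√2 / 2))).add
    ((hrpow.div_const (p / 2)).const_mul ((2 : ℝ) ^ ((p - 4) / 4)))).congr_deriv ?_
  rw [show p / 2 - 1 = (p - 2) / 2 by ring]
  field_simp

theorem potential_zero (hp : p ≠ 0) : potential p 0 = 0 := by
  simp [potential, Real.zero_rpow (div_ne_zero hp two_ne_zero)]

theorem potential_sqrt_two_div_two (hp : p ≠ 0) : potential p (√2 / 2) = 1 / p - 1 / 2 := by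
  have hsqrt : √2 / 2 = (2 : ℝ) ^ (-(1 : ℝ) / 2) := by
    rw [Real.sqrt_eq_rpow, show -(1 : ℝ) / 2 = 1 / 2 - 1 by ring,
      Real.rpow_sub two_pos, Real.rpow_one]
  have hpow : (2 : ℝ) ^ ((p - 4) / 4) * (√2 / 2) ^ (p / 2) = 1 / 2 := by
    rw [hsqrt, ← Real.rpow_mul zero_le_two, ← Real.rpow_add two_pos,
      show (p - 4) / 4 + -(1 : ℝ) / 2 * (p / 2) = -1 by ring, Real.rpow_neg_one, one_div]
  have hsq : √2 / 2 * (√2 / 2) = 1 / 2 := by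
    rw [div_mul_div_comm, Real.mul_self_sqrt zero_le_two]
    norm_num
  have hsplit : potential p (√2 / 2)
      = -(√2 / 2 * (√2 / 2)) + (2 : ℝ) ^ ((p - 4) / 4) * (√2 / 2) ^ (p / 2) / (p / 2) := by
    unfold potential
    ring
  rw [hsplit, hpow, hsq]
  field_simp
  ring

end Potential

theorem stmt_14_general (p : ℝ) (hp : 4 < p) (Rstar : ℝ) (v : ℝ → ℝ)
    (hC1 : Differentiable ℝ v)
    (hC2 : ∀ r : ℝ, r < Rstar → DifferentiableAt ℝ (deriv v) r)
    (hbc : v Rstar = 0 ∧ deriv v Rstar = 0)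
    (hode : ∀ r : ℝ, r < Rstar →
      - deriv (deriv v) r = - Real.sqrt 2 / 2 + (2 : ℝ) ^ ((p - 4) / 4) * (v r) ^ ((p - 2) / 2))
    (hlim : Tendsto v atBot (𝓝 (Real.sqrt 2 / 2)))
    (hlim' : Tendsto (deriv v) atBot (𝓝 (0 : ℝ))) :
    False := by
  have hp0 : p ≠ 0 := by positivity
  have h := primitive_zero_le_of_energy
    (f := fun s => -√2 / 2 + (2 : ℝ) ^ ((p - 4) / 4) * s ^ ((p - 2) / 2))
    (hasDerivAt_potential (by linarith)) hC1 hC2 hode hbc.1 hlim hlim'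
  rw [potential_zero hp0, potential_sqrt_two_div_two hp0] at h
  have : 1 / p < 1 / 2 := one_div_lt_one_div_of_lt two_pos (by linarith)
  linarith

/-- no bounded nonincreasing `C²` function `v`, positive on
`J = (−∞, R*)` and vanishing together with `v'` at `R* < ∞`, with
`v → √2/2` and `v' → 0` at `−∞`, can solve
`−v'' = −√2/2 + 2^((p−4)/4) v^((p−2)/2)` on `J`. -/
theorem stmt_14 (p : ℝ) (hp : 4 < p) (Rstar : ℝ) (v : ℝ → ℝ)
    (hC1 : Differentiable ℝ v)
    (hC2 : ∀ r : ℝ, r < Rstar → DifferentiableAt ℝ (deriv v) r)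
    (hmono : Antitone v) (hbd : ∃ M : ℝ, ∀ r : ℝ, |v r| ≤ M)
    (hpos : ∀ r : ℝ, r < Rstar → 0 < v r)
    (hsupp : ∀ r : ℝ, Rstar ≤ r → v r = 0)
    (hbc : v Rstar = 0 ∧ deriv v Rstar = 0)
    (hode : ∀ r : ℝ, r < Rstar →
      - deriv (deriv v) r = - Real.sqrt 2 / 2 + (2 : ℝ) ^ ((p - 4) / 4) * (v r) ^ ((p - 2) / 2))
    (hlim : Tendsto v atBot (𝓝 (Real.sqrt 2 / 2)))
    (hlim' : Tendsto (deriv v) atBot (𝓝 (0 : ℝ))) :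
    False :=
  stmt_14_general p hp Rstar v hC1 hC2 hbc hode hlim hlim'
end
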